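/- Let ρ : ℝ → ℝ be Lebesgue integrable. Then (1/R) ∫_{−R}^{R} ∫_{−R}^{R} ρ(x−y) dx dy → 2 ∫_ℝ ρ(x) dx as R → ∞. -/

import Mathlib

/-!
Substituting `y = R u` turns `(1/R) ∫_{-R}^{R} ∫_{-R}^{R} ρ(x - y) dx dy` into
`∫_{-1}^{1} ∫_{-R(1+u)}^{R(1-u)} ρ(x) dx du`. For every `u ∈ (-1, 1)` the window
`[-R(1+u), R(1-u)]` exhausts `ℝ`, so the inner integral tends to `∫ ρ`, and it is bounded by
`‖ρ‖₁`; dominated convergence gives the limit `2 ∫ ρ`.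
-/

open MeasureTheory Filter Topology Set intervalIntegral

variable {E : Type*} [NormedAddCommGroup E] [NormedSpace ℝ E] {f : ℝ → E}

theorem Continuous.intervalIntegral_of_integrable {α : Type*} [TopologicalSpace α]
    (hf : Integrable f) {a b : α → ℝ} (ha : Continuous a) (hb : Continuous b) :
    Continuous fun t => ∫ x in a t..b t, f x := by
  have hprim := continuous_primitive (fun _ _ => hf.intervalIntegrable) 0
  convert (hprim.comp hb).sub (hprim.comp ha) using 2 with t
  exact (integral_interval_sub_left hf.intervalIntegrable hf.intervalIntegrable).symm

theorem norm_intervalIntegral_le_integral_norm (hf : Integrable f) (a b : ℝ) :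
    ‖∫ x in a..b, f x‖ ≤ ∫ x, ‖f x‖ :=
  (norm_integral_le_integral_norm_uIoc).trans <|
    setIntegral_le_integral hf.norm (.of_forall fun _ => norm_nonneg _)

theorem tendsto_intervalIntegral_sub_mul_atTop (hf : Integrable f) {u : ℝ} (hu : u ∈ Ioo (-1) 1) :
    Tendsto (fun R => ∫ x in -R - R * u..R - R * u, f x) atTop (𝓝 (∫ x, f x)) := by
  refine intervalIntegral_tendsto_integral hf ?_ ?_
  · exact (tendsto_id.const_mul_atTop_of_neg (by linarith [hu.1] : -(1 + u) < 0)).congr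
      fun R => by simp only [id]; ring
  · exact (tendsto_id.const_mul_atTop (by linarith [hu.2] : 0 < 1 - u)).congr
      fun R => by simp only [id]; ring

theorem tendsto_integral_intervalIntegral_sub_mul_atTop [CompleteSpace E] (hf : Integrable f) :
    Tendsto (fun R => ∫ u in (-1)..1, ∫ x in -R - R * u..R - R * u, f x) atTop
      (𝓝 ((2 : ℝ) • ∫ x, f x)) := by
  have hconst : ∫ _ in (-1 : ℝ)..1, ∫ x, f x = (2 : ℝ) • ∫ x, f x := by norm_num
  rw [← hconst]
  refine tendsto_integral_filter_of_dominated_convergence (fun _ => ∫ x, ‖f x‖)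
    (.of_forall fun R => ?_) (.of_forall fun R => .of_forall fun u _ => ?_)
    intervalIntegrable_const ?_
  · exact (Continuous.intervalIntegral_of_integrable hf (by fun_prop) (by fun_prop))
      |>.aestronglyMeasurable
  · exact norm_intervalIntegral_le_integral_norm hf _ _
  · -- at `u = 1` the window is `[-2R, 0]`, which does not exhaust `ℝ`
    filter_upwards [Measure.ae_ne volume 1] with u hu1 hu
    rw [uIoc_of_le (by norm_num)] at hu
    exact tendsto_intervalIntegral_sub_mul_atTop hf ⟨hu.1, hu.2.lt_of_ne hu1⟩

theorem intervalIntegral_intervalIntegral_comp_sub_eq {R : ℝ} (hR : R ≠ 0) :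
    (1 / R) • ∫ y in -R..R, ∫ x in -R..R, f (x - y) =
      ∫ u in (-1)..1, ∫ x in -R - R * u..R - R * u, f x := by
  rw [integral_comp_mul_left (fun y => ∫ x in -R - y..R - y, f x) hR]
  simp only [integral_comp_sub_right, mul_neg_one, mul_one, one_div]

theorem stmt18 (ρ : ℝ → ℝ) (hρ : Integrable ρ) :
    Filter.Tendsto
      (fun R : ℝ => (1 / R) * ∫ y in (-R)..R, ∫ x in (-R)..R, ρ (x - y))
      Filter.atTop (nhds (2 * ∫ x : ℝ, ρ x)) := by
  refine (tendsto_integral_intervalIntegral_sub_mul_atTop hρ).congr' ?_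
  filter_upwards [eventually_ne_atTop 0] with R hR
  exact (intervalIntegral_intervalIntegral_comp_sub_eq hR).symm
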